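/- For every quantitative definite clause program P, every model B of P, every i ∈ ℕ and every atom a, the i-th P-chain value is below B: A_i a ≤ B a. -/
import Mathlib

/-- A quantitative definite clause: a head atom, a list of body atoms,
and a numerical factor. -/
structure QClause (α : Type*) where
  head : α
  body : List α
  factor : ℝ

variable {α : Type*}

/-- The minimum of the values of an interpretation over a list of atoms,
with the empty list yielding 1. -/
def bodyMin (I : α → ℝ) (l : List α) : ℝ := (l.map I).foldr min 1

/-- A quantitative definite clause program: a finite set of clauses whose
factors lie in (0,1]. -/
def QProgram (P : Set (QClause α)) : Prop :=
  P.Finite ∧ ∀ c ∈ P, 0 < c.factor ∧ c.factor ≤ 1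

/-- An interpretation assigns to each atom a value in [0,1]. -/
def IsInterp (I : α → ℝ) : Prop := ∀ a, 0 ≤ I a ∧ I a ≤ 1

/-- An interpretation is a model of `P` iff it is an interpretation and for
every clause `(h, [b₁,…,b_k], f)` of `P`, `I h ≥ f * min {I b₁, …, I b_k}`. -/
def IsModel (P : Set (QClause α)) (I : α → ℝ) : Prop :=
  IsInterp I ∧ ∀ c ∈ P, c.factor * bodyMin I c.body ≤ I c.head

/-- The `P`-chain: `A₀ a = 0` and
`A_{i+1} a = sup { f * min {A_i b₁, …, A_i b_k} : (a,[b₁,…,b_k],f) ∈ P }`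
(in ℝ, `sSup ∅ = 0`). -/
noncomputable def chain (P : Set (QClause α)) : ℕ → α → ℝ
  | 0, _ => 0
  | i + 1, a =>
      sSup {x | ∃ c ∈ P, c.head = a ∧ x = c.factor * bodyMin (chain P i) c.body}

lemma bodyMin_mono {I J : α → ℝ} (h : ∀ a, I a ≤ J a) (l : List α) :
    bodyMin I l ≤ bodyMin J l := by
  induction l with
  | nil => simp [bodyMin]
  | cons x xs ih =>
      simp only [bodyMin, List.map_cons, List.foldr_cons] at *
      exact min_le_min (h x) ih

/-- Every chain value is below every model of `P`. -/
theorem stmt_6 (P : Set (QClause α)) (hP : QProgram P) (B : α → ℝ)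
    (hB : IsModel P B) : ∀ (i : ℕ) (a : α), chain P i a ≤ B a := by
  intro i
  induction i with
  | zero => intro a; simpa [chain] using (hB.1 a).1
  | succ i ih =>
      intro a
      apply Real.sSup_le _ (hB.1 a).1
      rintro x ⟨c, hc, hhead, rfl⟩
      subst hhead
      calc c.factor * bodyMin (chain P i) c.body
          ≤ c.factor * bodyMin B c.body := by
            exact mul_le_mul_of_nonneg_left (bodyMin_mono ih c.body)
              (hP.2 c hc).1.le
        _ ≤ B c.head := hB.2 c hc
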